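/- Let (f_t)_{t≥0} be Fréchet-differentiable functions of weights W = (w^(1), …, w^(m)) and parameters g, each positively scale-invariant in W. Fix learning rates η_t^(i) > 0, η_t^g > 0 and momentum parameter ρ, and consider the PSI-SGDM updates: u_{t+1}^(i) = ρ u_t^(i) − η_t^(i) ‖w_t^(i)‖² ∇_{w^(i)} f_t(W_t, g_t), w_{t+1}^(i) = w_t^(i) + u_{t+1}^(i), g_{t+1} = g_t − η_t^g ∇_g f_t(W_t, g_t). Let (Ŵ_t, Û_t, ĝ_t) be the iterates of the same updates started from Ŵ_0 = T_a(W_0), Û_0 = T_a(U_0), ĝ_0 = g_0 for some a ∈ ℝ^m with all a_i > 0, where all blocks of W_0 are nonzero. Then for every t, Ŵ_t = T_a(W_t), Û_t = T_a(U_t), and ĝ_t = g_t. -/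

import Mathlib

open MeasureTheory RealInnerProductSpace
open scoped BigOperators

noncomputable section

/-- The space of weight tuples `W = (w⁽¹⁾, …, w⁽ᵐ⁾)` with `w⁽ⁱ⁾ ∈ ℝ^{dᵢ}`. -/
abbrev Wsp (m : ℕ) (d : Fin m → ℕ) : Type :=
  PiLp 2 fun i : Fin m => EuclideanSpace ℝ (Fin (d i))

/-- The space of extra parameters `g ∈ ℝᵖ`. -/
abbrev Gsp (p : ℕ) : Type := EuclideanSpace ℝ (Fin p)

/-- Blockwise positive rescaling `T_a(W) = (a₁ w⁽¹⁾, …, a_m w⁽ᵐ⁾)`. -/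
def rescale {m : ℕ} {d : Fin m → ℕ} (a : Fin m → ℝ) (W : Wsp m d) : Wsp m d :=
  WithLp.toLp 2 (fun i => a i • W i)

/-- `f` is positively scale-invariant in the weights. -/
def PSI {m p : ℕ} {d : Fin m → ℕ} (f : Wsp m d → Gsp p → ℝ) : Prop :=
  ∀ a : Fin m → ℝ, (∀ i, 0 < a i) → ∀ W g, f (rescale a W) g = f W g

/-- Partial (Fréchet) gradient of `f` in the `i`-th weight block. -/
def gradW {m p : ℕ} {d : Fin m → ℕ} (f : Wsp m d → Gsp p → ℝ)
    (W : Wsp m d) (g : Gsp p) (i : Fin m) : EuclideanSpace ℝ (Fin (d i)) :=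
  gradient (fun v => f (WithLp.toLp 2 (Function.update W.ofLp i v)) g) (W i)


/-- Partial (Fréchet) gradient of `f` in the parameters `g`. -/
def gradG {m p : ℕ} {d : Fin m → ℕ} (f : Wsp m d → Gsp p → ℝ)
    (W : Wsp m d) (g : Gsp p) : Gsp p :=
  gradient (fun u => f W u) g

/-! Scale invariance `f (T_a W) g = f W g` makes the slice of `f` through `T_a W` in block `i`
the slice through `W` precomposed with `v ↦ aᵢ⁻¹ v`, so the block gradient at `T_a W` is
`aᵢ⁻¹` times the one at `W`, while the gradient in `g` is unchanged. The step size
`‖aᵢ w‖² = aᵢ² ‖w‖²` turns `aᵢ⁻¹` into `aᵢ`, so one PSI-SGDM step commutes with `T_a`, and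
induction on `t` finishes. -/

lemma gradient_comp_smul {F : Type*} [NormedAddCommGroup F] [InnerProductSpace ℝ F]
    [CompleteSpace F] (φ : F → ℝ) (c : ℝ) (x : F) :
    gradient (fun v => φ (c • v)) x = c • gradient φ (c • x) := by
  simp only [gradient, fderiv_comp_smul, map_smul]

section Rescale

variable {m : ℕ} {d : Fin m → ℕ}

lemma rescale_apply (a : Fin m → ℝ) (W : Wsp m d) (i : Fin m) :
    rescale a W i = a i • W i := rfl

lemma update_rescale (a : Fin m → ℝ) (W : Wsp m d) {i : Fin m} (hai : a i ≠ 0)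
    (v : EuclideanSpace ℝ (Fin (d i))) :
    (WithLp.toLp 2 (Function.update (rescale a W).ofLp i v) : Wsp m d)
      = rescale a (WithLp.toLp 2 (Function.update W.ofLp i ((a i)⁻¹ • v))) := by
  ext1 j
  rcases eq_or_ne j i with rfl | hj
  · simp [rescale_apply, smul_smul, mul_inv_cancel₀ hai]
  · simp [rescale_apply, Function.update_of_ne hj]

variable {p : ℕ} {f : Wsp m d → Gsp p → ℝ} {a : Fin m → ℝ}

lemma PSI.gradW_rescale (hf : PSI f) (ha : ∀ i, 0 < a i) (W : Wsp m d) (g : Gsp p)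
    (i : Fin m) : gradW f (rescale a W) g i = (a i)⁻¹ • gradW f W g i := by
  have hai : a i ≠ 0 := (ha i).ne'
  have hslice : (fun v => f (WithLp.toLp 2 (Function.update (rescale a W).ofLp i v)) g)
      = fun v => f (WithLp.toLp 2 (Function.update W.ofLp i ((a i)⁻¹ • v))) g := by
    funext v
    rw [update_rescale a W hai, hf a ha]
  rw [gradW, hslice, rescale_apply,
    gradient_comp_smul (fun v => f (WithLp.toLp 2 (Function.update W.ofLp i v)) g),
    inv_smul_smul₀ hai, gradW]

lemma PSI.gradG_rescale (hf : PSI f) (ha : ∀ i, 0 < a i) (W : Wsp m d) (g : Gsp p) :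
    gradG f (rescale a W) g = gradG f W g := by
  simp only [gradG, hf a ha]

end Rescale

lemma smul_momentum_step {E : Type*} [NormedAddCommGroup E] [NormedSpace ℝ E]
    {c : ℝ} (hc : 0 < c) (ρ η : ℝ) (u w G : E) :
    c • (ρ • u - (η * ‖w‖ ^ 2) • G) = ρ • (c • u) - (η * ‖c • w‖ ^ 2) • (c⁻¹ • G) := by
  rw [norm_smul, Real.norm_of_nonneg hc.le, smul_sub, smul_smul, smul_smul, smul_smul,
    smul_smul]
  congr 2
  · ring
  · field_simp

theorem stmt9_general {m p : ℕ} {d : Fin m → ℕ} (f : ℕ → Wsp m d → Gsp p → ℝ)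
    (hPSI : ∀ t, PSI (f t))
    (η : ℕ → Fin m → ℝ)
    (ηg : ℕ → ℝ) (ρ : ℝ)
    (W W' U U' : ℕ → Wsp m d) (g g' : ℕ → Gsp p)
    (a : Fin m → ℝ) (ha : ∀ i, 0 < a i)
    (hU : ∀ t i, U (t + 1) i
      = ρ • U t i - (η t i * ‖W t i‖ ^ 2) • gradW (f t) (W t) (g t) i)
    (hW : ∀ t i, W (t + 1) i = W t i + U (t + 1) i)
    (hg : ∀ t, g (t + 1) = g t - ηg t • gradG (f t) (W t) (g t))
    (hU' : ∀ t i, U' (t + 1) i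
      = ρ • U' t i - (η t i * ‖W' t i‖ ^ 2) • gradW (f t) (W' t) (g' t) i)
    (hW' : ∀ t i, W' (t + 1) i = W' t i + U' (t + 1) i)
    (hg' : ∀ t, g' (t + 1) = g' t - ηg t • gradG (f t) (W' t) (g' t))
    (hW'0 : W' 0 = rescale a (W 0)) (hU'0 : U' 0 = rescale a (U 0))
    (hg'0 : g' 0 = g 0) :
    ∀ t, W' t = rescale a (W t) ∧ U' t = rescale a (U t) ∧ g' t = g t := by
  intro t
  induction t with
  | zero => exact ⟨hW'0, hU'0, hg'0⟩
  | succ t ih =>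
    obtain ⟨hWt, hUt, hgt⟩ := ih
    have hUnext : U' (t + 1) = rescale a (U (t + 1)) := by
      ext1 i
      rw [hU', rescale_apply, hU, hWt, hUt, hgt, (hPSI t).gradW_rescale ha, rescale_apply,
        rescale_apply, smul_momentum_step (ha i)]
    refine ⟨?_, hUnext, ?_⟩
    · ext1 i
      rw [hW', rescale_apply, hW, hWt, hUnext, rescale_apply, rescale_apply, smul_add]
    · rw [hg', hg, hWt, hgt, (hPSI t).gradG_rescale ha]

/-- PSI-SGDM iterates started from positively scale-equivalent points
stay positively scale-equivalent: if `Ŵ₀ = T_a(W₀)`, `Û₀ = T_a(U₀)`, `ĝ₀ = g₀`, then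
`Ŵ_t = T_a(W_t)`, `Û_t = T_a(U_t)` and `ĝ_t = g_t` for every `t`. -/
theorem stmt9 {m p : ℕ} {d : Fin m → ℕ} (f : ℕ → Wsp m d → Gsp p → ℝ)
    (hdiff : ∀ t, Differentiable ℝ fun q : Wsp m d × Gsp p => f t q.1 q.2)
    (hPSI : ∀ t, PSI (f t))
    (η : ℕ → Fin m → ℝ) (hη : ∀ t i, 0 < η t i)
    (ηg : ℕ → ℝ) (hηg : ∀ t, 0 < ηg t) (ρ : ℝ)
    (W W' U U' : ℕ → Wsp m d) (g g' : ℕ → Gsp p)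
    (a : Fin m → ℝ) (ha : ∀ i, 0 < a i)
    (hW0nz : ∀ i, W 0 i ≠ 0)
    (hU : ∀ t i, U (t + 1) i
      = ρ • U t i - (η t i * ‖W t i‖ ^ 2) • gradW (f t) (W t) (g t) i)
    (hW : ∀ t i, W (t + 1) i = W t i + U (t + 1) i)
    (hg : ∀ t, g (t + 1) = g t - ηg t • gradG (f t) (W t) (g t))
    (hU' : ∀ t i, U' (t + 1) i
      = ρ • U' t i - (η t i * ‖W' t i‖ ^ 2) • gradW (f t) (W' t) (g' t) i)
    (hW' : ∀ t i, W' (t + 1) i = W' t i + U' (t + 1) i)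
    (hg' : ∀ t, g' (t + 1) = g' t - ηg t • gradG (f t) (W' t) (g' t))
    (hW'0 : W' 0 = rescale a (W 0)) (hU'0 : U' 0 = rescale a (U 0))
    (hg'0 : g' 0 = g 0) :
    ∀ t, W' t = rescale a (W t) ∧ U' t = rescale a (U t) ∧ g' t = g t :=
  stmt9_general f hPSI η ηg ρ W W' U U' g g' a ha hU hW hg hU' hW' hg' hW'0 hU'0 hg'0

end
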